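/- arXiv:2410.01182 — 8 statements merged into one kernel-verified Lean document; each statement's English description precedes it below -/
import Mathlib

section
/- Let S, S', T be finite multisets of rational numbers with |S| = |S'|. If the Newton polygon of S lies on or below that of S' (i.e., S ≤ S' in the Newton polygon partial order), then the Newton polygon of the multiset sum S ⊕ T lies on or below that of S' ⊕ T, where ⊕ denotes multiset union. -/
/-- Newton polygon partial order on finite multisets of rationals:
`S ≤ T` iff they have the same cardinality and every partial sum of the
increasing enumeration of `S` is at most the corresponding one of `T`. -/
def npLE (S T : Multiset ℚ) : Prop :=
  Multiset.card S = Multiset.card T ∧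
    ∀ i : ℕ, ((S.sort (· ≤ ·)).take i).sum ≤ ((T.sort (· ≤ ·)).take i).sum

/-!
`Σ_S(i)` is the least sum of an `i`-element sub-multiset of `S`, attained by the `i` smallest
elements. Given `i`, take the `i` smallest elements of `S' + T` and split them as `A + B` with
`A ≤ S'`, `B ≤ T`. Then `Σ_{S+T}(i) ≤ Σ_S(|A|) + Σ_T(|B|) ≤ Σ_{S'}(|A|) + Σ_T(|B|) ≤ ΣA + ΣB`,
and the right-hand side is `Σ_{S'+T}(i)`.
-/

theorem Multiset.exists_le_le_of_le_add {α : Type*} {C S T : Multiset α} (h : C ≤ S + T) :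
    ∃ A B, A ≤ S ∧ B ≤ T ∧ C = A + B := by
  classical
  exact ⟨C - T, C - (C - T), Multiset.sub_le_iff_le_add.mpr h, tsub_tsub_le,
    (add_tsub_cancel_of_le tsub_le_self).symm⟩

theorem List.Pairwise.sum_take_card_le {α : Type*} [AddCommMonoid α] [PartialOrder α]
    [IsOrderedAddMonoid α] {l : List α} (hl : l.Pairwise (· ≤ ·)) {A : Multiset α}
    (hA : A ≤ l) : (l.take (Multiset.card A)).sum ≤ A.sum := by
  induction l generalizing A with
  | nil =>
    obtain rfl : A = 0 := by simpa using hA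
    simp
  | cons x l ih =>
    obtain ⟨hx, hl⟩ := List.pairwise_cons.mp hl
    obtain rfl | ⟨a, A', rfl, hA'⟩ : A = 0 ∨ ∃ a A', A = a ::ₘ A' ∧ A' ≤ l := by
      by_cases hxA : x ∈ A
      · obtain ⟨A', rfl⟩ := Multiset.exists_cons_of_mem hxA
        exact Or.inr ⟨x, A', rfl, (Multiset.cons_le_cons_iff x).mp hA⟩
      · rw [← Multiset.cons_coe, Multiset.le_cons_of_notMem hxA] at hA
        rcases Multiset.empty_or_exists_mem A with rfl | ⟨a, ha⟩
        · exact Or.inl rfl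
        obtain ⟨A', rfl⟩ := Multiset.exists_cons_of_mem ha
        exact Or.inr ⟨a, A', rfl, (Multiset.le_cons_self A' a).trans hA⟩
    · simp
    have hxa : x ≤ a := by
      rcases List.mem_cons.mp (Multiset.mem_coe.mp
        (Multiset.mem_of_le hA (Multiset.mem_cons_self a A'))) with rfl | ha
      · exact le_rfl
      · exact hx a ha
    simpa using add_le_add hxa (ih hl hA')

namespace Multiset

variable {α : Type*} [LinearOrder α]

def smallest (S : Multiset α) (i : ℕ) : Multiset α :=
  ((S.sort (· ≤ ·)).take i : List α)

theorem smallest_le (S : Multiset α) (i : ℕ) : S.smallest i ≤ S := by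
  have h := coe_le.mpr (List.take_sublist i (S.sort (· ≤ ·))).subperm
  rwa [sort_eq] at h

theorem card_smallest (S : Multiset α) (i : ℕ) : card (S.smallest i) = min i (card S) := by
  simp [smallest]

variable [AddCommMonoid α]

def smallestSum (S : Multiset α) (i : ℕ) : α :=
  ((S.sort (· ≤ ·)).take i).sum

theorem sum_smallest (S : Multiset α) (i : ℕ) : (S.smallest i).sum = S.smallestSum i := by
  simp [smallest, smallestSum]

theorem smallestSum_min_card (S : Multiset α) (i : ℕ) :
    S.smallestSum (min i (card S)) = S.smallestSum i := by
  rw [smallestSum, smallestSum, ← length_sort (· ≤ ·) (s := S), ← List.take_eq_take_min]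

variable [IsOrderedAddMonoid α]

theorem smallestSum_card_le_sum {A S : Multiset α} (h : A ≤ S) :
    S.smallestSum (card A) ≤ A.sum :=
  (pairwise_sort S _).sum_take_card_le (by rwa [sort_eq])

theorem smallestSum_add_le (S T : Multiset α) {j k : ℕ} (hj : j ≤ card S) (hk : k ≤ card T) :
    (S + T).smallestSum (j + k) ≤ S.smallestSum j + T.smallestSum k := by
  have hcard : card (S.smallest j + T.smallest k) = j + k := by
    simp [card_smallest, hj, hk]
  simpa [hcard, sum_smallest] using
    smallestSum_card_le_sum (add_le_add (S.smallest_le j) (T.smallest_le k))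

end Multiset

theorem newton_add_right_mono (S S' T : Multiset ℚ) (h : npLE S S') :
    npLE (S + T) (S' + T) := by
  obtain ⟨hcard, hle⟩ := h
  have hcard' : Multiset.card (S + T) = Multiset.card (S' + T) := by simp [hcard]
  refine ⟨hcard', fun i => ?_⟩
  obtain ⟨A, B, hA, hB, hAB⟩ := Multiset.exists_le_le_of_le_add ((S' + T).smallest_le i)
  have hi : A.card + B.card = min i (Multiset.card (S + T)) := by
    rw [← Multiset.card_add, ← hAB, Multiset.card_smallest, hcard']
  calc (S + T).smallestSum i = (S + T).smallestSum (A.card + B.card) := by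
        rw [hi, Multiset.smallestSum_min_card]
    _ ≤ S.smallestSum A.card + T.smallestSum B.card :=
        Multiset.smallestSum_add_le S T (hcard ▸ Multiset.card_le_card hA)
          (Multiset.card_le_card hB)
    _ ≤ S'.smallestSum A.card + T.smallestSum B.card := by gcongr; exact hle _
    _ ≤ A.sum + B.sum :=
        add_le_add (Multiset.smallestSum_card_le_sum hA) (Multiset.smallestSum_card_le_sum hB)
    _ = (S' + T).smallestSum i := by rw [← Multiset.sum_add, ← hAB, Multiset.sum_smallest]
end

section
/- Let S, S', T be finite multisets of rational numbers with S ≤ S' in the Newton polygon partial order. Then S ⊗ T ≤ S' ⊗ T, where S ⊗ T is the multiset of all pairwise sums {s + t : s ∈ S, t ∈ T} counted with multiplicity. -/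
/-- The product `S ⊗ T`: the multiset of all pairwise sums, with multiplicity. -/
def otimes (S T : Multiset ℚ) : Multiset ℚ :=
  S.bind fun s => T.map fun t => s + t

/-!
The partial sums `i ↦ Σ_S(i)` of the increasing enumeration form a convex function whose
Legendre conjugate is `c ↦ Σ_{s ∈ S} (c - s)⁺`; the maximum defining the conjugate is attained
at the number of elements below `c`, and conversely `Σ_S(i+1)` is recovered at `c = s_i`.
Hence `S ≤ T` iff `|S| = |T|` and the conjugates satisfy the reverse pointwise inequality.
The conjugate of `S ⊗ T` at `c` is the sum over `t ∈ T` of the conjugate of `S` at `c - t`,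
which is monotone in the conjugate of `S`.
-/

namespace List

variable {α : Type*} [AddCommGroup α] [LinearOrder α] [IsOrderedAddMonoid α]

theorem nsmul_sub_sum_take_le_sum_posPart {L : List α} {k : ℕ} (hk : k ≤ L.length) (c : α) :
    k • c - (L.take k).sum ≤ (L.map fun x => (c - x)⁺).sum := by
  induction L generalizing k with
  | nil => simp_all
  | cons a L ih =>
    cases k with
    | zero =>
      simp only [zero_smul, take_zero, sum_nil, sub_zero]
      exact sum_nonneg (by simp [posPart_nonneg])
    | succ k =>
      simp only [take_succ_cons, sum_cons, map_cons, succ_nsmul']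
      calc c + k • c - (a + (L.take k).sum) = (c - a) + (k • c - (L.take k).sum) := by abel
        _ ≤ _ := add_le_add (le_posPart _) (ih (Nat.le_of_succ_le_succ hk))

theorem sum_posPart_sub_eq_zero {L : List α} {c : α} (h : ∀ x ∈ L, c ≤ x) :
    (L.map fun x => (c - x)⁺).sum = 0 :=
  sum_eq_zero fun y hy => by
    obtain ⟨x, hx, rfl⟩ := mem_map.mp hy
    exact posPart_eq_zero.mpr (sub_nonpos.mpr (h x hx))

theorem exists_sum_posPart_eq {L : List α} (hL : L.Pairwise (· ≤ ·)) (c : α) :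
    ∃ k ≤ L.length, (L.map fun x => (c - x)⁺).sum = k • c - (L.take k).sum := by
  induction L with
  | nil => exact ⟨0, le_rfl, by simp⟩
  | cons a L ih =>
    obtain ⟨ha, hL⟩ := pairwise_cons.mp hL
    by_cases hca : c ≤ a
    · refine ⟨0, Nat.zero_le _, ?_⟩
      simpa using sum_posPart_sub_eq_zero fun x hx =>
        hca.trans ((mem_cons.mp hx).elim (fun h => h.ge) (ha x))
    · obtain ⟨k, hk, hsum⟩ := ih hL
      refine ⟨k + 1, Nat.succ_le_succ hk, ?_⟩
      rw [map_cons, sum_cons, hsum, posPart_eq_self.mpr (sub_nonneg.mpr (le_of_not_ge hca)),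
        take_succ_cons, sum_cons, succ_nsmul']
      abel

theorem sum_posPart_sub_getElem {L : List α} (hL : L.Pairwise (· ≤ ·)) {i : ℕ} (hi : i < L.length) :
    (L.map fun x => (L[i] - x)⁺).sum = (i + 1) • L[i] - (L.take (i + 1)).sum := by
  induction L generalizing i with
  | nil => simp at hi
  | cons a L ih =>
    obtain ⟨ha, hL⟩ := pairwise_cons.mp hL
    cases i with
    | zero =>
      simp [sum_posPart_sub_eq_zero ha]
    | succ i =>
      have hi' : i < L.length := Nat.lt_of_succ_lt_succ hi
      have haL : a ≤ L[i] := ha _ (getElem_mem hi')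
      rw [getElem_cons_succ, map_cons, sum_cons, ih hL hi', posPart_eq_self.mpr (sub_nonneg.mpr haL),
        take_succ_cons, sum_cons, succ_nsmul' _ (i + 1)]
      abel

end List

open Multiset

/-- `c ↦ max_{i ≤ |S|} (i c - Σ_S(i))`, the Legendre conjugate of the Newton polygon of `S`. -/
def npConj (S : Multiset ℚ) (c : ℚ) : ℚ :=
  (S.map fun s => (c - s)⁺).sum

theorem npConj_eq_sort (S : Multiset ℚ) (c : ℚ) :
    npConj S c = ((S.sort (· ≤ ·)).map fun s => (c - s)⁺).sum := by
  rw [npConj, ← Multiset.sum_coe, ← Multiset.map_coe, Multiset.sort_eq]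

theorem npLE_iff {S S' : Multiset ℚ} :
    npLE S S' ↔ card S = card S' ∧ ∀ c, npConj S' c ≤ npConj S c := by
  have hsorted := fun X : Multiset ℚ => X.pairwise_sort (· ≤ ·)
  refine ⟨fun ⟨hcard, hsum⟩ => ⟨hcard, fun c => ?_⟩, fun ⟨hcard, hconj⟩ => ⟨hcard, fun i => ?_⟩⟩
  · obtain ⟨k, hk, hS'⟩ := List.exists_sum_posPart_eq (hsorted S') c
    rw [npConj_eq_sort, npConj_eq_sort, hS']
    have hkS : k ≤ (S.sort (· ≤ ·)).length := by simpa [hcard] using hk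
    linarith [List.nsmul_sub_sum_take_le_sum_posPart hkS c, hsum k]
  · wlog hi : i ≤ card S generalizing i
    · have htake := fun X : Multiset ℚ => (X.sort (· ≤ ·)).take_eq_take_iff (i := i) (j := card S)
      rw [htake S |>.mpr (by simp only [length_sort]; omega),
        htake S' |>.mpr (by simp only [length_sort, hcard]; omega)]
      exact this _ le_rfl
    rcases i with _ | i
    · simp
    have hi' : i < (S.sort (· ≤ ·)).length := by simpa using hi
    have hiS' : i + 1 ≤ (S'.sort (· ≤ ·)).length := by simpa [hcard] using hi
    set c := (S.sort (· ≤ ·))[i]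
    have hS := List.sum_posPart_sub_getElem (hsorted S) hi'
    have hS' := List.nsmul_sub_sum_take_le_sum_posPart hiS' c
    have hconj_c := hconj c
    rw [npConj_eq_sort, npConj_eq_sort] at hconj_c
    linarith

theorem card_otimes (S T : Multiset ℚ) : card (otimes S T) = card S * card T := by
  simp [otimes, card_bind]

theorem npConj_otimes (S T : Multiset ℚ) (c : ℚ) :
    npConj (otimes S T) c = (T.map fun t => npConj S (c - t)).sum := by
  simp only [npConj, otimes, map_bind, sum_bind, map_map, Function.comp_def, sub_add_eq_sub_sub_swap]
  exact sum_map_sum_map S T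

theorem newton_otimes_right_mono (S S' T : Multiset ℚ) (h : npLE S S') :
    npLE (otimes S T) (otimes S' T) := by
  obtain ⟨hcard, hconj⟩ := npLE_iff.mp h
  refine npLE_iff.mpr ⟨by rw [card_otimes, card_otimes, hcard], fun c => ?_⟩
  rw [npConj_otimes, npConj_otimes]
  exact sum_map_le_sum_map _ _ fun t _ => hconj (c - t)
end

section
/- For integers d ≥ 1, k ≥ 1 and 0 ≤ i ≤ j ≤ k, define P(d;k,i) = ({0,1}^{⊗d})^{⊕(k−i)} ⊕ ({1/2,1/2}^{⊗d})^{⊕i}. Then P(d;k,i) ≤ P(d;k,j) in the Newton polygon partial order, i.e., the order P(d;k,i) ≤ P(d;k,j) holds if and only if i ≤ j. -/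
/-- `d`-fold tensor power `S^{⊗ d}`, with `S^{⊗ 0} = {0}`. -/
def opow (S : Multiset ℚ) : ℕ → Multiset ℚ
  | 0 => {0}
  | n + 1 => otimes S (opow S n)

/-- `P(d; k, i) = ({0,1}^{⊗d})^{⊕(k−i)} ⊕ ({1/2,1/2}^{⊗d})^{⊕i}`. -/
def P (d k i : ℕ) : Multiset ℚ :=
  (k - i) • opow {0, 1} d + i • opow {(1 : ℚ) / 2, 1 / 2} d

/-!
For `i ≤ j`, `P(d;k,i)` and `P(d;k,j)` share the summand
`({0,1}^{⊗d})^{⊕(k−j)} ⊕ ({1/2,1/2}^{⊗d})^{⊕i}` and differ in `j − i` copies of `{0,1}^{⊗d}`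
against as many copies of `{1/2,1/2}^{⊗d}`, that is, `2^d` copies of `d/2`, the mean of
`{0,1}^{⊗d}`. A multiset lies below the constant multiset with the same mean, since the average of
its `m` smallest elements is at most its mean; and adding a common summand preserves the order,
because the `m`-th sorted prefix sum is the least sum of an `m`-element sub-multiset.

Conversely, `P(d;k,j)` has `k − j` zeros, so its `(k − j)`-th prefix sum vanishes. If `P(d;k,i)`
lies below it, the `k − j` smallest entries of `P(d;k,i)` are nonnegative with sum `≤ 0`, hence
zero; but `P(d;k,i)` has only `k − i` zeros.
-/

theorem Multiset.exists_eq_add_of_le_add {β : Type*} [DecidableEq β] {U A T : Multiset β}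
    (h : U ≤ A + T) : ∃ U₁ ≤ A, ∃ U₂ ≤ T, U = U₁ + U₂ := by
  refine ⟨U ∩ A, Multiset.inter_le_right, U - A, ?_, ?_⟩
  · rwa [Multiset.sub_le_iff_le_add, add_comm]
  · ext x
    simp only [Multiset.count_add, Multiset.count_inter, Multiset.count_sub]
    omega

section SortedPrefixSum

variable {α : Type*} [LinearOrder α]

namespace List

variable [AddCommMonoid α] [IsOrderedAddMonoid α]

theorem sum_take_cons_le_sum_take {a : α} {L : List α} (ha : ∀ x ∈ L, a ≤ x) {n : ℕ}
    (hn : n ≤ L.length) : ((a :: L).take n).sum ≤ (L.take n).sum := by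
  cases n with
  | zero => simp
  | succ n =>
    rw [take_succ_cons, sum_cons, sum_take_succ _ _ (by omega), add_comm]
    gcongr
    exact ha _ (getElem_mem _)

theorem Pairwise.sum_take_length_le_sum_of_sublist {l L : List α} (hL : L.Pairwise (· ≤ ·))
    (h : l <+ L) : (L.take l.length).sum ≤ l.sum := by
  induction h with
  | slnil => simp
  | cons a h ih =>
    rw [pairwise_cons] at hL
    exact (sum_take_cons_le_sum_take hL.1 h.length_le).trans (ih hL.2)
  | cons_cons a _ ih =>
    simpa using add_le_add_right (ih (pairwise_cons.1 hL).2) a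

theorem length_nsmul_sum_le_length_nsmul_sum {l₁ l₂ : List α}
    (h : ∀ a ∈ l₁, ∀ b ∈ l₂, a ≤ b) : l₂.length • l₁.sum ≤ l₁.length • l₂.sum := by
  calc l₂.length • l₁.sum = (l₂.map fun _ => l₁.sum).sum := by simp
    _ ≤ (l₂.map fun b => l₁.length • b).sum :=
      sum_le_sum fun b hb => sum_le_card_nsmul _ _ fun a ha => h a ha b hb
    _ = l₁.length • l₂.sum := smul_sum.symm

theorem Pairwise.length_nsmul_sum_take_le {L : List α} (hL : L.Pairwise (· ≤ ·)) {m : ℕ}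
    (hm : m ≤ L.length) : L.length • (L.take m).sum ≤ m • L.sum := by
  have hcross : ∀ a ∈ L.take m, ∀ b ∈ L.drop m, a ≤ b := by
    rw [← take_append_drop m L, pairwise_append] at hL
    exact hL.2.2
  have hlen : (L.drop m).length • (L.take m).sum ≤ m • (L.drop m).sum := by
    simpa [length_take, hm] using length_nsmul_sum_le_length_nsmul_sum hcross
  calc L.length • (L.take m).sum
      = m • (L.take m).sum + (L.drop m).length • (L.take m).sum := by
        rw [← add_nsmul, length_drop]; congr 1; omega
    _ ≤ m • (L.take m).sum + m • (L.drop m).sum := add_le_add_right hlen _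
    _ = m • L.sum := by rw [← nsmul_add, ← sum_append, take_append_drop]

end List

namespace Multiset

theorem sort_replicate (n : ℕ) (a : α) :
    (replicate n a).sort (· ≤ ·) = List.replicate n a := by
  rw [← coe_replicate, coe_sort,
    List.mergeSort_eq_self _ (List.pairwise_replicate.2 (Or.inr le_rfl))]

variable [AddCommMonoid α]

theorem sum_sort (S : Multiset α) : (S.sort (· ≤ ·)).sum = S.sum := by
  rw [← sum_coe, sort_eq]

def sortedPrefixSum (S : Multiset α) (m : ℕ) : α :=
  ((S.sort (· ≤ ·)).take m).sum

theorem sortedPrefixSum_min_card (S : Multiset α) (m : ℕ) :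
    S.sortedPrefixSum (min m (card S)) = S.sortedPrefixSum m := by
  rw [sortedPrefixSum, sortedPrefixSum, ← length_sort (· ≤ ·), ← List.take_eq_take_min]

theorem sortedPrefixSum_replicate (n : ℕ) (a : α) (m : ℕ) :
    (replicate n a).sortedPrefixSum m = min m n • a := by
  rw [sortedPrefixSum, sort_replicate, List.take_replicate, List.sum_replicate]

theorem exists_le_card_eq_sum_eq_sortedPrefixSum (S : Multiset α) (m : ℕ) :
    ∃ U ≤ S, card U = min m (card S) ∧ U.sum = S.sortedPrefixSum m :=
  ⟨((S.sort (· ≤ ·)).take m : List α),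
    (coe_le.2 (List.take_sublist m _).subperm).trans_eq (sort_eq _ _), by simp,
    by simp [sortedPrefixSum]⟩

section OrderedAddMonoid

variable [IsOrderedAddMonoid α]

theorem sortedPrefixSum_card_le_sum_of_le {U S : Multiset α} (h : U ≤ S) :
    S.sortedPrefixSum (card U) ≤ U.sum := by
  obtain ⟨l, hl, hsub⟩ : (U.sort (· ≤ ·)).Subperm (S.sort (· ≤ ·)) := by
    rw [← coe_le, sort_eq, sort_eq]; exact h
  have := (pairwise_sort S _).sum_take_length_le_sum_of_sublist hsub
  rwa [hl.length_eq, length_sort, hl.sum_eq, sum_sort] at this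

theorem sortedPrefixSum_add_le {A S : Multiset α} {a b : ℕ} (ha : a ≤ card A)
    (hb : b ≤ card S) :
    (A + S).sortedPrefixSum (a + b) ≤ A.sortedPrefixSum a + S.sortedPrefixSum b := by
  obtain ⟨U, hU, hUc, hUs⟩ := exists_le_card_eq_sum_eq_sortedPrefixSum A a
  obtain ⟨V, hV, hVc, hVs⟩ := exists_le_card_eq_sum_eq_sortedPrefixSum S b
  rw [min_eq_left ha] at hUc
  rw [min_eq_left hb] at hVc
  simpa [hUc, hVc, hUs, hVs] using sortedPrefixSum_card_le_sum_of_le (add_le_add hU hV)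

theorem sortedPrefixSum_add_left_le {A S T : Multiset α} (hc : card S = card T)
    (h : ∀ m, S.sortedPrefixSum m ≤ T.sortedPrefixSum m) (m : ℕ) :
    (A + S).sortedPrefixSum m ≤ (A + T).sortedPrefixSum m := by
  obtain ⟨U, hU, hUc, hUs⟩ := exists_le_card_eq_sum_eq_sortedPrefixSum (A + T) m
  obtain ⟨U₁, h₁, U₂, h₂, rfl⟩ := exists_eq_add_of_le_add hU
  have hm : min m (card (A + S)) = card U₁ + card U₂ := by
    rw [← card_add, hUc, card_add, card_add, hc]
  calc (A + S).sortedPrefixSum m = (A + S).sortedPrefixSum (card U₁ + card U₂) := by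
        rw [← hm, sortedPrefixSum_min_card]
    _ ≤ A.sortedPrefixSum (card U₁) + S.sortedPrefixSum (card U₂) :=
        sortedPrefixSum_add_le (card_le_card h₁) (hc ▸ card_le_card h₂)
    _ ≤ U₁.sum + U₂.sum := add_le_add (sortedPrefixSum_card_le_sum_of_le h₁)
        ((h _).trans (sortedPrefixSum_card_le_sum_of_le h₂))
    _ = (A + T).sortedPrefixSum m := by rw [← sum_add, hUs]

theorem card_nsmul_sortedPrefixSum_le (S : Multiset α) {m : ℕ} (hm : m ≤ card S) :
    card S • S.sortedPrefixSum m ≤ m • S.sum := by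
  have := (pairwise_sort S (· ≤ ·)).length_nsmul_sum_take_le (m := m) (by rwa [length_sort])
  rwa [length_sort, sum_sort] at this

theorem sortedPrefixSum_nonpos_of_le_count {S : Multiset α} {m : ℕ} (hm : m ≤ count 0 S) :
    S.sortedPrefixSum m ≤ 0 := by
  simpa using sortedPrefixSum_card_le_sum_of_le (le_count_iff_replicate_le.1 hm)

theorem le_count_zero_of_sortedPrefixSum_nonpos {S : Multiset α} (hS : ∀ x ∈ S, 0 ≤ x)
    {m : ℕ} (hm : m ≤ card S) (h : S.sortedPrefixSum m ≤ 0) : m ≤ count 0 S := by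
  obtain ⟨U, hU, hUc, hUs⟩ := exists_le_card_eq_sum_eq_sortedPrefixSum S m
  have hU0 : ∀ x ∈ U, 0 ≤ x := fun x hx => hS x (mem_of_le hU hx)
  have hUzero : U = replicate m 0 := eq_replicate.2 ⟨hUc.trans (min_eq_left hm),
    all_zero_of_le_zero_le_of_sum_eq_zero hU0 (le_antisymm (hUs ▸ h) (sum_nonneg hU0))⟩
  exact le_count_iff_replicate_le.2 (hUzero ▸ hU)

end OrderedAddMonoid

theorem sortedPrefixSum_le_sortedPrefixSum_replicate [IsOrderedCancelAddMonoid α]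
    {S : Multiset α} {a : α} (h : S.sum = card S • a) (m : ℕ) :
    S.sortedPrefixSum m ≤ (replicate (card S) a).sortedPrefixSum m := by
  rw [sortedPrefixSum_replicate, ← sortedPrefixSum_min_card]
  rcases (card S).eq_zero_or_pos with h0 | h0
  · simp [card_eq_zero.1 h0, sortedPrefixSum]
  refine le_of_nsmul_le_nsmul_right h0.ne' ?_
  calc card S • S.sortedPrefixSum (min m (card S))
      ≤ min m (card S) • S.sum := card_nsmul_sortedPrefixSum_le S (min_le_right _ _)
    _ = card S • (min m (card S) • a) := by rw [h, smul_comm]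

end Multiset
end SortedPrefixSum

open Multiset

theorem npLE.add_left {S T : Multiset ℚ} (h : npLE S T) (A : Multiset ℚ) :
    npLE (A + S) (A + T) :=
  ⟨by rw [card_add, card_add, h.1], sortedPrefixSum_add_left_le h.1 h.2⟩

theorem npLE_replicate_of_sum_eq {S : Multiset ℚ} {a : ℚ} (h : S.sum = card S • a) :
    npLE S (replicate (card S) a) :=
  ⟨(card_replicate _ _).symm, sortedPrefixSum_le_sortedPrefixSum_replicate h⟩

theorem npLE.count_zero_le {S T : Multiset ℚ} (hS : ∀ x ∈ S, 0 ≤ x) (h : npLE S T) :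
    count 0 T ≤ count 0 S :=
  le_count_zero_of_sortedPrefixSum_nonpos hS (h.1 ▸ count_le_card 0 T)
    ((h.2 _).trans (sortedPrefixSum_nonpos_of_le_count le_rfl))

theorem Multiset.sum_map_const_add {M : Type*} [AddCommMonoid M] (c : M) (T : Multiset M) :
    (T.map (c + ·)).sum = card T • c + T.sum := by
  rw [sum_map_add, map_const', sum_replicate, map_id']

theorem otimes_cons (a : ℚ) (S T : Multiset ℚ) :
    otimes (a ::ₘ S) T = T.map (a + ·) + otimes S T := by
  simp [otimes]

theorem otimes_replicate (m p : ℕ) (a b : ℚ) :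
    otimes (replicate m a) (replicate p b) = replicate (m * p) (a + b) := by
  induction m with
  | zero => simp [otimes]
  | succ m ih => rw [replicate_succ, otimes_cons, ih, map_replicate, ← replicate_add]; ring_nf

theorem opow_replicate (m n : ℕ) (c : ℚ) : opow (replicate m c) n = replicate (m ^ n) (n * c) := by
  induction n with
  | zero => simp [opow, replicate_one]
  | succ n ih => rw [opow, ih, otimes_replicate]; push_cast; ring_nf

theorem opow_zero_one_succ (n : ℕ) :
    opow {0, 1} (n + 1) = opow {0, 1} n + (opow {0, 1} n).map (1 + ·) := by
  rw [opow, show ({0, 1} : Multiset ℚ) = 0 ::ₘ 1 ::ₘ 0 from rfl, otimes_cons, otimes_cons]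
  simp [otimes]

theorem card_opow_zero_one (n : ℕ) : card (opow {0, 1} n) = 2 ^ n := by
  induction n with
  | zero => rfl
  | succ n ih => rw [opow_zero_one_succ, card_add, card_map, ih, pow_succ, mul_two]

theorem nonneg_of_mem_opow_zero_one {n : ℕ} : ∀ x ∈ opow {0, 1} n, 0 ≤ x := by
  induction n with
  | zero => simp [opow]
  | succ n ih =>
    simp only [opow_zero_one_succ, mem_add, mem_map]
    rintro x (hx | ⟨y, hy, rfl⟩)
    · exact ih x hx
    · linarith [ih y hy]

theorem count_zero_opow_zero_one (n : ℕ) : count 0 (opow {0, 1} n) = 1 := by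
  induction n with
  | zero => rfl
  | succ n ih =>
    rw [opow_zero_one_succ, count_add, ih, count_eq_zero.2]
    simp only [mem_map, not_exists, not_and]
    intro y hy
    linarith [nonneg_of_mem_opow_zero_one y hy]

theorem sum_opow_zero_one (n : ℕ) :
    (opow {0, 1} n).sum = card (opow {0, 1} n) • ((n : ℚ) / 2) := by
  induction n with
  | zero => simp [opow]
  | succ n ih =>
    rw [opow_zero_one_succ, sum_add, sum_map_const_add, card_add, card_map, ih, card_opow_zero_one]
    push_cast [nsmul_eq_mul]
    ring

theorem opow_half_half (n : ℕ) :
    opow {(1 : ℚ) / 2, 1 / 2} n = replicate (2 ^ n) ((n : ℚ) / 2) := by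
  rw [show ({(1 : ℚ) / 2, 1 / 2} : Multiset ℚ) = replicate 2 (1 / 2) from rfl, opow_replicate]
  ring_nf

theorem nonneg_of_mem_P {d k i : ℕ} : ∀ x ∈ P d k i, 0 ≤ x := by
  intro x hx
  rw [P, opow_half_half] at hx
  rcases mem_add.1 hx with hx | hx
  · exact nonneg_of_mem_opow_zero_one x (mem_of_mem_nsmul hx)
  · rw [eq_of_mem_replicate (mem_of_mem_nsmul hx)]
    positivity

theorem count_zero_P {d : ℕ} (hd : d ≠ 0) (k i : ℕ) : count 0 (P d k i) = k - i := by
  rw [P, opow_half_half, count_add, count_nsmul, count_nsmul, count_zero_opow_zero_one,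
    count_replicate, if_neg (by simpa using hd)]
  simp

theorem npLE_P_of_le {d k i j : ℕ} (hij : i ≤ j) (hj : j ≤ k) : npLE (P d k i) (P d k j) := by
  set B := opow {0, 1} d with hB
  set C := opow {(1 : ℚ) / 2, 1 / 2} d with hC
  have hPi : P d k i = ((k - j) • B + i • C) + (j - i) • B := by
    rw [P, add_right_comm, ← add_nsmul, Nat.sub_add_sub_cancel hj hij]
  have hPj : P d k j = ((k - j) • B + i • C) + (j - i) • C := by
    rw [P, add_assoc, ← add_nsmul, Nat.add_sub_cancel' hij]
  have hCrep : (j - i) • C = replicate (card ((j - i) • B)) ((d : ℚ) / 2) := by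
    rw [hC, hB, opow_half_half, nsmul_replicate, card_nsmul, card_opow_zero_one]
  have hBC : npLE ((j - i) • B) ((j - i) • C) := by
    refine hCrep ▸ npLE_replicate_of_sum_eq ?_
    rw [sum_nsmul, hB, sum_opow_zero_one, card_nsmul, mul_nsmul']
  rw [hPi, hPj]
  exact hBC.add_left _

theorem le_of_npLE_P {d k i j : ℕ} (hd : d ≠ 0) (hi : i ≤ k) (hj : j ≤ k)
    (h : npLE (P d k i) (P d k j)) : i ≤ j := by
  have hzeros := h.count_zero_le nonneg_of_mem_P
  rw [count_zero_P hd, count_zero_P hd] at hzeros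
  omega

theorem P_le_iff_general (d k i j : ℕ) (hd : 1 ≤ d) (hi : i ≤ k) (hj : j ≤ k) :
    npLE (P d k i) (P d k j) ↔ i ≤ j :=
  ⟨le_of_npLE_P (Nat.one_le_iff_ne_zero.1 hd) hi hj, fun hij => npLE_P_of_le hij hj⟩

theorem P_le_iff (d k i j : ℕ) (hd : 1 ≤ d) (hk : 1 ≤ k) (hi : i ≤ k) (hj : j ≤ k) :
    npLE (P d k i) (P d k j) ↔ i ≤ j :=
  P_le_iff_general d k i j hd hi hj
end

section
/- Let F and K be number fields and define λ_F(K) as the supremum over g ∈ Gal(Q̄/F) of the largest cardinality of a ⟨g⟩-orbit on Hom(K, Q̄), and σ_F(K) = 1 − λ_F(K)/[K:ℚ]. If K' ⊆ K is a subfield, then σ_F(K') ≤ σ_F(K). -/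
noncomputable section

/-- A fixed algebraic closure of `ℚ`. -/
abbrev Qbar : Type := AlgebraicClosure ℚ

/-- The orbit of an embedding `σ : K → Q̄` under the integer powers of a Galois
element `g ∈ Gal(Q̄/F)`, acting by postcomposition. -/
def gOrbit {F : Type*} [Field F] [Algebra F Qbar]
    {K : Type*} [Field K] [Algebra ℚ K]
    (g : Qbar ≃ₐ[F] Qbar) (σ : K →ₐ[ℚ] Qbar) : Set (K →ₐ[ℚ] Qbar) :=
  {τ | ∃ n : ℤ, ∀ x : K, τ x = (g ^ n) (σ x)}

/-- `λ_F(K)`: the supremum over `g ∈ Gal(Q̄/F)` of the largest cardinality of a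
`⟨g⟩`-orbit on `Hom(K, Q̄)`. -/
def lam (F : Type*) [Field F] [Algebra F Qbar]
    (K : Type*) [Field K] [Algebra ℚ K] : ℕ :=
  sSup {m : ℕ | ∃ (g : Qbar ≃ₐ[F] Qbar) (σ : K →ₐ[ℚ] Qbar),
    m = Nat.card (gOrbit g σ)}

/-- The slope `σ_F(K) = 1 − λ_F(K)/[K:ℚ]`. -/
def slopeF (F : Type*) [Field F] [Algebra F Qbar]
    (K : Type*) [Field K] [Algebra ℚ K] : ℚ :=
  1 - (lam F K : ℚ) / (Module.finrank ℚ K : ℚ)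

open Module

set_option linter.unusedSectionVars false

section Aux

variable {F K K' : Type} [Field F] [NumberField F] [Algebra F Qbar]
    [Field K] [NumberField K] [Field K'] [NumberField K']
    [Algebra K' K] [IsScalarTower ℚ K' K]

/-- Restriction of an embedding of `K` to the subfield `K'`. -/
def restr (τ : K →ₐ[ℚ] Qbar) : K' →ₐ[ℚ] Qbar :=
  τ.comp (IsScalarTower.toAlgHom ℚ K' K)

lemma restr_mem_gOrbit (g : Qbar ≃ₐ[F] Qbar) (σ τ : K →ₐ[ℚ] Qbar)
    (hτ : τ ∈ gOrbit g σ) : restr (K' := K') τ ∈ gOrbit g (restr σ) := by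
  obtain ⟨n, hn⟩ := hτ
  exact ⟨n, fun y => hn (algebraMap K' K y)⟩

lemma bddAbove_lamSet :
    BddAbove {m : ℕ | ∃ (g : Qbar ≃ₐ[F] Qbar) (σ : K →ₐ[ℚ] Qbar),
      m = Nat.card (gOrbit g σ)} := by
  refine ⟨Nat.card (K →ₐ[ℚ] Qbar), ?_⟩
  rintro m ⟨g, σ, rfl⟩
  have : Nat.card (gOrbit g σ) = (gOrbit g σ).ncard := Nat.card_coe_set_eq _
  rw [this]
  calc (gOrbit g σ).ncard ≤ (Set.univ : Set (K →ₐ[ℚ] Qbar)).ncard :=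
        Set.ncard_le_ncard (Set.subset_univ _) Set.finite_univ
    _ = Nat.card (K →ₐ[ℚ] Qbar) := Set.ncard_univ _

lemma lamSet_nonempty :
    {m : ℕ | ∃ (g : Qbar ≃ₐ[F] Qbar) (σ : K →ₐ[ℚ] Qbar),
      m = Nat.card (gOrbit g σ)}.Nonempty :=
  ⟨_, 1, IsAlgClosed.lift (M := Qbar) (R := ℚ) (S := K), rfl⟩

/-- Key counting lemma: the orbit of `σ` is at most `[K : K']` times the orbit of
its restriction. -/
lemma card_gOrbit_le (g : Qbar ≃ₐ[F] Qbar) (σ : K →ₐ[ℚ] Qbar) :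
    Nat.card (gOrbit g σ) ≤ finrank K' K * Nat.card (gOrbit g (restr (K' := K') σ)) := by
  classical
  haveI : FiniteDimensional K' K := FiniteDimensional.right ℚ K' K
  have hfin : (gOrbit g σ).Finite := Set.toFinite _
  have hfin' : (gOrbit g (restr (K' := K') σ)).Finite := Set.toFinite _
  set s : Finset (K →ₐ[ℚ] Qbar) := hfin.toFinset with hs
  have hcard : Nat.card (gOrbit g σ) = s.card := by
    rw [Nat.card_coe_set_eq, Set.ncard_eq_toFinset_card _ hfin]
  have hcard' : Nat.card (gOrbit g (restr (K' := K') σ)) = hfin'.toFinset.card := by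
    rw [Nat.card_coe_set_eq, Set.ncard_eq_toFinset_card _ hfin']
  rw [hcard, hcard']
  have himg : s.image restr ⊆ hfin'.toFinset := by
    intro b hb
    obtain ⟨τ, hτ, rfl⟩ := Finset.mem_image.mp hb
    rw [Set.Finite.mem_toFinset]
    exact restr_mem_gOrbit g σ τ (hfin.mem_toFinset.mp hτ)
  have hfiber : ∀ b ∈ s.image (restr (K' := K')),
      (s.filter fun τ => restr τ = b).card ≤ finrank K' K := by
    intro b _
    letI : Algebra K' Qbar := b.toRingHom.toAlgebra
    have key : (s.filter fun τ => restr τ = b).card ≤ Fintype.card (K →ₐ[K'] Qbar) := by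
      rw [← Fintype.card_coe]
      refine Fintype.card_le_of_injective
        (fun τ => ⟨τ.1.toRingHom, fun y => ?_⟩) ?_
      · have hb : restr (K' := K') τ.1 = b := (Finset.mem_filter.mp τ.2).2
        have h2 : restr (K' := K') τ.1 y = b y := by rw [hb]
        simp only [restr, AlgHom.comp_apply, IsScalarTower.toAlgHom_apply] at h2
        rw [RingHom.algebraMap_toAlgebra]
        exact h2
      · intro τ₁ τ₂ h
        apply Subtype.ext
        ext x
        exact congrArg (fun (f : K →ₐ[K'] Qbar) => f x) h
    have hsep : Algebra.IsSeparable K' K := inferInstance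
    rwa [AlgHom.card K' K Qbar] at key
  calc s.card ≤ finrank K' K * (s.image restr).card :=
        Finset.card_le_mul_card_image s _ hfiber
    _ ≤ finrank K' K * hfin'.toFinset.card :=
        Nat.mul_le_mul_left _ (Finset.card_le_card himg)

end Aux

theorem slope_mono_subfield (F K K' : Type) [Field F] [NumberField F] [Algebra F Qbar]
    [Field K] [NumberField K] [Field K'] [NumberField K']
    [Algebra K' K] [IsScalarTower ℚ K' K] :
    slopeF F K' ≤ slopeF F K := by
  haveI : FiniteDimensional K' K := FiniteDimensional.right ℚ K' K
  have hmem := Nat.sSup_mem (lamSet_nonempty (F := F) (K := K)) (bddAbove_lamSet (F := F))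
  obtain ⟨g, σ, hσ⟩ := hmem
  have hkey : lam F K ≤ finrank K' K * Nat.card (gOrbit g (restr (K' := K') σ)) := by
    rw [show lam F K = Nat.card (gOrbit g σ) from hσ]
    exact card_gOrbit_le g σ
  have hle : Nat.card (gOrbit g (restr (K' := K') σ)) ≤ lam F K' :=
    le_csSup (bddAbove_lamSet (F := F)) ⟨g, restr σ, rfl⟩
  have hd : finrank ℚ K' * finrank K' K = finrank ℚ K := finrank_mul_finrank ℚ K' K
  have hd'pos : 0 < finrank ℚ K' := finrank_pos
  have hdpos : 0 < finrank ℚ K := finrank_pos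
  have hmain : (lam F K : ℚ) / (finrank ℚ K : ℚ) ≤ (lam F K' : ℚ) / (finrank ℚ K' : ℚ) := by
    rw [div_le_div_iff₀ (by exact_mod_cast hdpos) (by exact_mod_cast hd'pos)]
    have h1 : (lam F K : ℚ) ≤ (finrank K' K : ℚ) * (lam F K' : ℚ) := by
      calc (lam F K : ℚ) ≤ (finrank K' K : ℚ) * (Nat.card (gOrbit g (restr (K' := K') σ)) : ℚ) := by
            exact_mod_cast hkey
        _ ≤ (finrank K' K : ℚ) * (lam F K' : ℚ) := by
            have := hle
            have h2 : (0:ℚ) ≤ (finrank K' K : ℚ) := by positivity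
            exact mul_le_mul_of_nonneg_left (by exact_mod_cast this) h2
    have h3 : (finrank ℚ K : ℚ) = (finrank ℚ K' : ℚ) * (finrank K' K : ℚ) := by
      exact_mod_cast hd.symm
    calc (lam F K : ℚ) * (finrank ℚ K' : ℚ)
        ≤ ((finrank K' K : ℚ) * (lam F K' : ℚ)) * (finrank ℚ K' : ℚ) := by
          have : (0:ℚ) ≤ (finrank ℚ K' : ℚ) := by positivity
          exact mul_le_mul_of_nonneg_right h1 this
      _ = (lam F K' : ℚ) * (finrank ℚ K : ℚ) := by rw [h3]; ring
  unfold slopeF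
  linarith
end
end

section
/- Let F and K be number fields such that [K:ℚ] is a prime number p not dividing [F:ℚ]. Then the slope σ_F(K) = 0; equivalently, some element of Gal(Q̄/F) acts on Hom(K, Q̄) with an orbit of full size [K:ℚ]. -/
noncomputable section

/-! The image of `Gal(Q̄/ℚ)` in the permutations of `Hom(K, Q̄)` is transitive on a set of
`p` elements, so its order is divisible by `p`. The image of `Gal(Q̄/F)` has index dividing
`[Gal(Q̄/ℚ) : Gal(Q̄/F)] = [F:ℚ]`, which is prime to `p`, so by Cauchy's theorem it contains an
element of order `p`. A permutation of order `p` has an orbit of size `p`, i.e. of full size. -/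

open Function Subgroup

theorem Equiv.Perm.exists_minimalPeriod_eq_of_orderOf_eq_prime {α : Type*} {σ : Equiv.Perm α}
    {p : ℕ} (hp : p.Prime) (hσ : orderOf σ = p) : ∃ a, minimalPeriod σ a = p := by
  obtain ⟨a, ha⟩ : ∃ a, σ a ≠ a := by
    by_contra! h
    rw [show σ = 1 from Equiv.ext h, orderOf_one] at hσ
    exact hp.one_lt.ne hσ
  have hper : IsPeriodicPt σ p a := by
    rw [IsPeriodicPt, IsFixedPt, ← Equiv.Perm.coe_pow, ← hσ, pow_orderOf_eq_one]
    rfl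
  refine ⟨a, (hp.eq_one_or_self_of_dvd _ hper.minimalPeriod_dvd).resolve_left ?_⟩
  rwa [minimalPeriod_eq_one_iff_isFixedPt]

namespace MulAction

variable {G S : Type*} [Group G] [MulAction G S]

theorem natCard_orbit_zpowers (g : G) (s : S) :
    Nat.card (orbit (zpowers g) s) = minimalPeriod (g • ·) s := by
  rw [Nat.card_congr (orbitZPowersEquiv g s), Nat.card_zmod]

theorem prime_dvd_natCard_map_toPermHom [IsPretransitive G S] {p : ℕ} (hp : p.Prime)
    (hS : Nat.card S = p) {H : Subgroup G} (hH : ¬ p ∣ H.index) :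
    p ∣ Nat.card (H.map (toPermHom G S)) := by
  obtain ⟨s⟩ : Nonempty S := (Nat.card_pos_iff.mp (hS ▸ hp.pos)).1
  have hker : p ∣ (toPermHom G S).ker.index := by
    rw [← hS, ← index_stabilizer_of_transitive G s]
    exact index_dvd_of_le fun g hg => congr($hg s)
  have hinf : (toPermHom G S).ker.index ∣ (toPermHom G S).ker.relIndex H * H.index := by
    rw [← inf_relIndex_right, relIndex_mul_index inf_le_right]
    exact index_dvd_of_le inf_le_left
  rw [← MonoidHom.domRestrict_range, ← index_ker, MonoidHom.ker_domRestrict]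
  exact ((Nat.Prime.dvd_mul hp).mp (hker.trans hinf)).resolve_right hH

theorem exists_mem_natCard_orbit_zpowers_eq_prime [Finite S] [IsPretransitive G S] {p : ℕ}
    (hp : p.Prime) (hS : Nat.card S = p) {H : Subgroup G} (hH : ¬ p ∣ H.index) :
    ∃ h ∈ H, ∃ s : S, Nat.card (orbit (zpowers h) s) = p := by
  have : Fact p.Prime := ⟨hp⟩
  obtain ⟨⟨_, h, hmem, rfl⟩, hord⟩ :=
    exists_prime_orderOf_dvd_card' p (prime_dvd_natCard_map_toPermHom hp hS hH)
  obtain ⟨s, hs⟩ := Equiv.Perm.exists_minimalPeriod_eq_of_orderOf_eq_prime hp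
    (σ := toPermHom G S h) (by rwa [← Subgroup.orderOf_mk])
  exact ⟨h, hmem, s, (natCard_orbit_zpowers h s).trans hs⟩

end MulAction

namespace AlgEquiv

variable {R A B : Type*} [Field R] [Field A] [Field B] [Algebra R A] [Algebra R B]

instance : MulAction (B ≃ₐ[R] B) (A →ₐ[R] B) where
  smul g φ := (g : B →ₐ[R] B).comp φ
  one_smul _ := rfl
  mul_smul _ _ _ := rfl

instance [Normal R B] : MulAction.IsPretransitive (B ≃ₐ[R] B) (A →ₐ[R] B) where
  exists_smul_eq φ ψ := by
    let χ : φ.fieldRange ≃ₐ[R] ψ.fieldRange := (ofInjectiveField φ).symm.trans (ofInjectiveField ψ)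
    refine ⟨χ.liftNormal B, AlgHom.ext fun x => ?_⟩
    refine (χ.liftNormal_commutes B (ofInjectiveField φ x)).trans ?_
    change (ofInjectiveField ψ ((ofInjectiveField φ).symm (ofInjectiveField φ x)) : B) = ψ x
    rw [symm_apply_apply]
    rfl

variable (S : Type*) [Field S] [Algebra R S] [Algebra S B] [IsScalarTower R S B]

theorem range_restrictScalarsHom :
    (restrictScalarsHom R : (B ≃ₐ[S] B) →* (B ≃ₐ[R] B)).range =
      (IsScalarTower.toAlgHom R S B).fieldRange.fixingSubgroup := by
  ext g
  rw [IntermediateField.mem_fixingSubgroup_iff]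
  constructor
  · rintro ⟨g, rfl⟩ _ ⟨x, rfl⟩
    exact g.commutes x
  · intro hg
    refine ⟨AlgEquiv.ofRingEquiv (f := g.toRingEquiv) fun x => hg _ ⟨x, rfl⟩, ?_⟩
    ext; rfl

theorem index_range_restrictScalarsHom [IsGalois R B] :
    (restrictScalarsHom R : (B ≃ₐ[S] B) →* (B ≃ₐ[R] B)).range.index = Module.finrank R S := by
  rw [range_restrictScalarsHom, ← IntermediateField.finrank_eq_fixingSubgroup_index]
  exact (ofInjectiveField _).toLinearEquiv.finrank_eq.symm

end AlgEquiv

-- `Qbar` is a `ℚ`-algebra through `DivisionRing.toRatAlgebra`, so the library instance for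
-- `AlgebraicClosure.instAlgebra` does not apply as it stands.
instance : IsAlgClosure ℚ Qbar :=
  ⟨inferInstance, by convert AlgebraicClosure.isAlgebraic ℚ; exacts [rfl, Subsingleton.elim _ _]⟩

theorem gOrbit_eq_orbit_zpowers {F K : Type*} [Field F] [CharZero F] [Algebra F Qbar] [Field K]
    [Algebra ℚ K] (g : Qbar ≃ₐ[F] Qbar) (σ : K →ₐ[ℚ] Qbar) :
    gOrbit g σ = MulAction.orbit (zpowers (AlgEquiv.restrictScalarsHom ℚ g)) σ := by
  ext τ
  simp only [gOrbit, Set.mem_ofPred_eq, MulAction.mem_orbit_iff, Subtype.exists,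
    Subgroup.mk_smul, exists_prop, exists_mem_zpowers, ← map_zpow]
  exact exists_congr fun n => by rw [eq_comm, AlgHom.ext_iff]; rfl

theorem lam_eq_finrank_of_natCard_gOrbit_eq {F K : Type*} [Field F] [Algebra F Qbar] [Field K]
    [Algebra ℚ K] [FiniteDimensional ℚ K] (g : Qbar ≃ₐ[F] Qbar) (σ : K →ₐ[ℚ] Qbar)
    (h : Nat.card (gOrbit g σ) = Module.finrank ℚ K) : lam F K = Module.finrank ℚ K := by
  have hle : ∀ m ∈ {m : ℕ | ∃ (g : Qbar ≃ₐ[F] Qbar) (σ : K →ₐ[ℚ] Qbar),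
      m = Nat.card (gOrbit g σ)}, m ≤ Module.finrank ℚ K := by
    rintro _ ⟨g, σ, rfl⟩
    rw [← AlgHom.card ℚ K Qbar, ← Nat.card_eq_fintype_card]
    exact Nat.card_le_card_of_injective _ Subtype.val_injective
  exact le_antisymm (csSup_le ⟨_, g, σ, h.symm⟩ hle) (le_csSup ⟨_, hle⟩ ⟨g, σ, h.symm⟩)

theorem slope_eq_zero_of_prime_degree (F K : Type)
    [Field F] [NumberField F] [Algebra F Qbar] [Field K] [NumberField K]
    (p : ℕ) (hp : p.Prime) (hdeg : Module.finrank ℚ K = p)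
    (hndvd : ¬ p ∣ Module.finrank ℚ F) :
    slopeF F K = 0 ∧
      ∃ (g : Qbar ≃ₐ[F] Qbar) (σ : K →ₐ[ℚ] Qbar),
        Nat.card (gOrbit g σ) = Module.finrank ℚ K := by
  have hcard : Nat.card (K →ₐ[ℚ] Qbar) = p := by
    rw [Nat.card_eq_fintype_card, AlgHom.card, hdeg]
  obtain ⟨_, ⟨g, rfl⟩, σ, hσ⟩ := MulAction.exists_mem_natCard_orbit_zpowers_eq_prime hp hcard
    (H := (AlgEquiv.restrictScalarsHom ℚ : (Qbar ≃ₐ[F] Qbar) →* _).range)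
    (by rwa [AlgEquiv.index_range_restrictScalarsHom])
  have hg : Nat.card (gOrbit g σ) = Module.finrank ℚ K := by
    rw [gOrbit_eq_orbit_zpowers, hσ, hdeg]
  refine ⟨?_, g, σ, hg⟩
  rw [slopeF, lam_eq_finrank_of_natCard_gOrbit_eq g σ hg, div_self, sub_self]
  exact_mod_cast hdeg ▸ hp.ne_zero
end
end

section
/- Let F, K be number fields with Galois closures F̃, K̃ over ℚ. If K̃ and F̃ are linearly disjoint over ℚ (e.g., if disc(F) and disc(K) are coprime), then Gal(Q̄/F) surjects onto Gal(K̃/ℚ) under the restriction map; consequently σ_F(K) = σ_ℚ(K), and Gal(Q̄/F) contains an element bisecting Hom(K,Q̄) exactly when Gal(Q̄/ℚ) does. -/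
noncomputable section

instance Qbar.normal_rat : Normal ℚ Qbar := by
  have h : (DivisionRing.toRatAlgebra : Algebra ℚ Qbar) = AlgebraicClosure.instAlgebra ℚ :=
    Subsingleton.elim _ _
  rw [h]
  exact @IsAlgClosure.normal ℚ _ _ _ (AlgebraicClosure.instAlgebra ℚ) inferInstance

instance Qbar.normalClosure_normal_rat (K : Type*) [Field K] [Algebra ℚ K] :
    Normal ℚ (IntermediateField.normalClosure ℚ K Qbar) := by
  have := normalClosure.normal ℚ K Qbar
  convert this using 1
  exact Subsingleton.elim _ _

/-- `g` bisects `Hom(K, Q̄)`: it has exactly two orbits, of equal cardinality. -/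
def Bisects {F : Type*} [Field F] [Algebra F Qbar]
    (K : Type*) [Field K] [Algebra ℚ K] (g : Qbar ≃ₐ[F] Qbar) : Prop :=
  ∃ σ τ : K →ₐ[ℚ] Qbar, gOrbit g σ ≠ gOrbit g τ ∧
    (∀ υ : K →ₐ[ℚ] Qbar, gOrbit g υ = gOrbit g σ ∨ gOrbit g υ = gOrbit g τ) ∧
    Nat.card (gOrbit g σ) = Nat.card (gOrbit g τ)

/-!
By linear disjointness, every element of `Gal(K̃/ℚ)` is the restriction of an automorphism of `Q̄`
that is trivial on `F̃`, hence lies in `Gal(Q̄/F)`. Every embedding `K → Q̄` lands in `K̃`, so the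
`⟨g⟩`-orbits on `Hom(K, Q̄)` depend only on the restriction of `g` to `K̃`. Thus `Gal(Q̄/F)` and
`Gal(Q̄/ℚ)` realise exactly the same orbit decompositions of `Hom(K, Q̄)`, and `λ` and the
existence of a bisecting element agree over `F` and over `ℚ`.
-/

section RestrictNormal

variable {k Ω : Type*} [Field k] [Field Ω] [Algebra k Ω]

theorem AlgEquiv.apply_eq_of_restrictNormalHom_eq {E : IntermediateField k Ω} [Normal k E]
    {g₁ g₂ : Ω ≃ₐ[k] Ω} (h : restrictNormalHom E g₁ = restrictNormalHom E g₂)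
    {x : Ω} (hx : x ∈ E) : g₁ x = g₂ x := by
  rw [← restrictNormalHom_apply E g₁ ⟨x, hx⟩, ← restrictNormalHom_apply E g₂ ⟨x, hx⟩, h]

theorem AlgEquiv.zpow_apply_eq_of_restrictNormalHom_eq {E : IntermediateField k Ω} [Normal k E]
    {g₁ g₂ : Ω ≃ₐ[k] Ω} (h : restrictNormalHom E g₁ = restrictNormalHom E g₂) (n : ℤ)
    {x : Ω} (hx : x ∈ E) : (g₁ ^ n) x = (g₂ ^ n) x :=
  apply_eq_of_restrictNormalHom_eq (by rw [map_zpow, map_zpow, h]) hx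

theorem AlgEquiv.surjective_restrictNormalHom_restrictScalars {E₁ E₂ F : IntermediateField k Ω}
    [Normal k E₁] [Normal k E₂]
    (hsurj : Function.Surjective fun g : Ω ≃ₐ[k] Ω =>
      (restrictNormalHom E₁ g, restrictNormalHom E₂ g))
    (hF : F ≤ E₁) :
    Function.Surjective fun g : Ω ≃ₐ[F] Ω => restrictNormalHom E₂ (g.restrictScalars k) := by
  intro h
  obtain ⟨g, hg⟩ := hsurj (1, h)
  obtain ⟨hg₁, hg₂⟩ := Prod.ext_iff.mp hg
  have hfix : g ∈ F.fixingSubgroup := fun x =>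
    apply_eq_of_restrictNormalHom_eq (g₂ := 1) (hg₁.trans (map_one _).symm) (hF x.2)
  exact ⟨IntermediateField.fixingSubgroupEquiv F ⟨g, hfix⟩, hg₂⟩

end RestrictNormal

section Orbits

variable {K : Type*} [Field K] [Algebra ℚ K]

theorem gOrbit_restrictScalars {F : Type*} [Field F] [Algebra ℚ F] [Algebra F Qbar]
    [IsScalarTower ℚ F Qbar] (g : Qbar ≃ₐ[F] Qbar) (σ : K →ₐ[ℚ] Qbar) :
    gOrbit (g.restrictScalars ℚ) σ = gOrbit g σ := by
  have hpow (n : ℤ) : g.restrictScalars ℚ ^ n = (g ^ n).restrictScalars ℚ :=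
    (map_zpow (AlgEquiv.restrictScalarsHom ℚ) g n).symm
  simp only [gOrbit, hpow, AlgEquiv.coe_restrictScalars]

theorem gOrbit_eq_of_restrictNormalHom_eq {g₁ g₂ : Qbar ≃ₐ[ℚ] Qbar}
    (h : AlgEquiv.restrictNormalHom (IntermediateField.normalClosure ℚ K Qbar) g₁ =
      AlgEquiv.restrictNormalHom (IntermediateField.normalClosure ℚ K Qbar) g₂)
    (σ : K →ₐ[ℚ] Qbar) : gOrbit g₁ σ = gOrbit g₂ σ := by
  have hpow (n : ℤ) (x : K) : (g₁ ^ n) (σ x) = (g₂ ^ n) (σ x) :=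
    AlgEquiv.zpow_apply_eq_of_restrictNormalHom_eq h n (σ.fieldRange_le_normalClosure ⟨x, rfl⟩)
  simp only [gOrbit, hpow]

variable {F F' : Type*} [Field F] [Algebra F Qbar] [Field F'] [Algebra F' Qbar]

variable (K) in
def SameOrbits (g : Qbar ≃ₐ[F] Qbar) (g' : Qbar ≃ₐ[F'] Qbar) : Prop :=
  ∀ σ : K →ₐ[ℚ] Qbar, gOrbit g σ = gOrbit g' σ

theorem bisects_iff_of_sameOrbits {g : Qbar ≃ₐ[F] Qbar} {g' : Qbar ≃ₐ[F'] Qbar}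
    (h : SameOrbits K g g') : Bisects K g ↔ Bisects K g' := by
  rw [SameOrbits] at h
  simp only [Bisects, h]

variable (K) in
theorem lam_eq_of_sameOrbits
    (h : ∀ g : Qbar ≃ₐ[F] Qbar, ∃ g' : Qbar ≃ₐ[F'] Qbar, SameOrbits K g g')
    (h' : ∀ g' : Qbar ≃ₐ[F'] Qbar, ∃ g : Qbar ≃ₐ[F] Qbar, SameOrbits K g g') :
    lam F K = lam F' K := by
  unfold lam
  congr 1
  ext m
  constructor
  · rintro ⟨g, σ, rfl⟩
    obtain ⟨g', hg'⟩ := h g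
    exact ⟨g', σ, by rw [hg']⟩
  · rintro ⟨g', σ, rfl⟩
    obtain ⟨g, hg⟩ := h' g'
    exact ⟨g, σ, by rw [hg]⟩

variable (K) in
theorem exists_bisects_iff_of_sameOrbits
    (h : ∀ g : Qbar ≃ₐ[F] Qbar, ∃ g' : Qbar ≃ₐ[F'] Qbar, SameOrbits K g g')
    (h' : ∀ g' : Qbar ≃ₐ[F'] Qbar, ∃ g : Qbar ≃ₐ[F] Qbar, SameOrbits K g g') :
    (∃ g : Qbar ≃ₐ[F] Qbar, Bisects K g) ↔ ∃ g' : Qbar ≃ₐ[F'] Qbar, Bisects K g' := by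
  constructor
  · rintro ⟨g, hg⟩
    obtain ⟨g', hg'⟩ := h g
    exact ⟨g', (bisects_iff_of_sameOrbits hg').mp hg⟩
  · rintro ⟨g', hg'⟩
    obtain ⟨g, hg⟩ := h' g'
    exact ⟨g, (bisects_iff_of_sameOrbits hg).mpr hg'⟩

end Orbits

theorem linearly_disjoint_slope_general (F K : IntermediateField ℚ Qbar)
    (hdisj : Function.Surjective fun g : Qbar ≃ₐ[ℚ] Qbar =>
      (AlgEquiv.restrictNormalHom (F := ℚ) (K₁ := Qbar) (IntermediateField.normalClosure ℚ F Qbar) g,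
       AlgEquiv.restrictNormalHom (F := ℚ) (K₁ := Qbar) (IntermediateField.normalClosure ℚ K Qbar) g)) :
    Function.Surjective (fun g : Qbar ≃ₐ[↥F] Qbar =>
      AlgEquiv.restrictNormalHom (F := ℚ) (K₁ := Qbar) (IntermediateField.normalClosure ℚ K Qbar)
        (AlgEquiv.restrictScalars ℚ g)) ∧
    slopeF ↥F ↥K = slopeF ℚ ↥K ∧
    ((∃ g : Qbar ≃ₐ[↥F] Qbar, Bisects ↥K g) ↔
      (∃ g : Qbar ≃ₐ[ℚ] Qbar, Bisects ↥K g)) := by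
  have hsurj := AlgEquiv.surjective_restrictNormalHom_restrictScalars hdisj
    (IntermediateField.le_normalClosure F)
  have hdown (g : Qbar ≃ₐ[F] Qbar) :
      ∃ g' : Qbar ≃ₐ[ℚ] Qbar, SameOrbits K g g' :=
    ⟨g.restrictScalars ℚ, fun σ => (gOrbit_restrictScalars g σ).symm⟩
  have hup (g' : Qbar ≃ₐ[ℚ] Qbar) :
      ∃ g : Qbar ≃ₐ[F] Qbar, SameOrbits K g g' := by
    obtain ⟨g, hg⟩ := hsurj (AlgEquiv.restrictNormalHom _ g')
    exact ⟨g, fun σ =>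
      (gOrbit_restrictScalars g σ).symm.trans (gOrbit_eq_of_restrictNormalHom_eq hg σ)⟩
  refine ⟨hsurj, ?_, exists_bisects_iff_of_sameOrbits K hdown hup⟩
  rw [slopeF, slopeF, lam_eq_of_sameOrbits K hdown hup]

theorem linearly_disjoint_slope (F K : IntermediateField ℚ Qbar)
    [FiniteDimensional ℚ F] [FiniteDimensional ℚ K]
    (hdisj : Function.Surjective fun g : Qbar ≃ₐ[ℚ] Qbar =>
      (AlgEquiv.restrictNormalHom (F := ℚ) (K₁ := Qbar) (IntermediateField.normalClosure ℚ F Qbar) g,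
       AlgEquiv.restrictNormalHom (F := ℚ) (K₁ := Qbar) (IntermediateField.normalClosure ℚ K Qbar) g)) :
    Function.Surjective (fun g : Qbar ≃ₐ[↥F] Qbar =>
      AlgEquiv.restrictNormalHom (F := ℚ) (K₁ := Qbar) (IntermediateField.normalClosure ℚ K Qbar)
        (AlgEquiv.restrictScalars ℚ g)) ∧
    slopeF ↥F ↥K = slopeF ℚ ↥K ∧
    ((∃ g : Qbar ≃ₐ[↥F] Qbar, Bisects ↥K g) ↔
      (∃ g : Qbar ≃ₐ[ℚ] Qbar, Bisects ↥K g)) :=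
  linearly_disjoint_slope_general F K hdisj
end
end

section
/- Let K be a number field of degree k, p a rational prime, and a ∈ O_K a nonzero algebraic integer all of whose archimedean absolute values are at most 2√p. If p > 2^{2k}, then the sum Σ_{i : e_i > 0} f_i ≤ k/2, where a·O_K = ℘_1^{e_1}···℘_m^{e_m}·I is the factorization with ℘_i the primes over p of residue degrees f_i, and I coprime to p. -/
/-!
The primes of `s` are distinct maximal ideals containing `a`, so their product divides `(a)`, and
taking absolute norms gives `p ^ (∑ f_P) ∣ N(a)`. On the other hand `N(a) = ∏_v ‖a‖_v ^ (mult v)`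
is at most `(2√p) ^ k` (the archimedean part of the product formula). Hence
`p ^ (2 ∑ f_P) ≤ 4 ^ k p ^ k < p ^ (k + 1)` once `p > 2 ^ (2k)`.
-/

open NumberField Ideal

lemma Ideal.prod_dvd_span_singleton_of_mem {R : Type*} [CommRing R] [IsDedekindDomain R]
    {s : Finset (Ideal R)} (hs : ∀ P ∈ s, P.IsMaximal) {a : R} (ha : ∀ P ∈ s, a ∈ P) :
    (∏ P ∈ s, P) ∣ span {a} :=
  Finset.prod_dvd_of_coprime
    (fun P hP Q hQ hPQ ↦ isCoprime_iff_sup_eq.mpr ((hs P hP).coprime_of_ne (hs Q hQ) hPQ))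
    fun P hP ↦ dvd_span_singleton.mpr (ha P hP)

lemma Ideal.pow_sum_inertiaDeg'_dvd_absNorm_span_singleton {R : Type*} [CommRing R]
    [IsDedekindDomain R] [Module.Free ℤ R] [Module.Finite ℤ R] {p : ℕ} (hp : p.Prime) {a : R}
    {s : Finset (Ideal R)} (hs : ∀ P ∈ s, P.IsPrime ∧ (p : R) ∈ P ∧ a ∈ P) :
    p ^ ∑ P ∈ s, (span {(p : ℤ)}).inertiaDeg' P ∣ absNorm (span {a}) := by
  have hnorm : ∀ P ∈ s, absNorm P = p ^ (span {(p : ℤ)}).inertiaDeg' P := fun P hP ↦ by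
    obtain ⟨hP, hpP, -⟩ := hs P hP
    have : P.LiesOver (span {(p : ℤ)}) :=
      (liesOver_span_iff hP.ne_top (Nat.prime_iff_prime_int.mp hp)).mpr (by simpa using hpP)
    exact absNorm_eq_pow_inertiaDeg' P hp
  have hmax : ∀ P ∈ s, P.IsMaximal := fun P hP ↦ (hs P hP).1.isMaximal fun hbot ↦
    pow_ne_zero _ hp.ne_zero (by simpa [hbot] using (hnorm P hP).symm)
  simpa [map_prod, Finset.prod_congr rfl hnorm, Finset.prod_pow_eq_pow_sum] using
    map_dvd absNorm (prod_dvd_span_singleton_of_mem hmax fun P hP ↦ (hs P hP).2.2)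

lemma NumberField.absNorm_span_singleton_le_pow_finrank {K : Type*} [Field K] [NumberField K]
    {a : 𝓞 K} {B : ℝ} (h : ∀ v : InfinitePlace K, v (algebraMap (𝓞 K) K a) ≤ B) :
    (absNorm (span {a}) : ℝ) ≤ B ^ Module.finrank ℚ K := by
  have hnorm : (absNorm (span {a}) : ℝ) = |Algebra.norm ℚ (algebraMap (𝓞 K) K a)| := by
    rw [absNorm_span_singleton, ← Algebra.coe_norm_int a, Nat.cast_natAbs]
    push_cast
    rfl
  rw [hnorm, ← InfinitePlace.prod_eq_abs_norm, ← InfinitePlace.sum_mult_eq,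
    ← Finset.prod_pow_eq_pow_sum]
  exact Finset.prod_le_prod (fun v _ ↦ by positivity)
    fun v _ ↦ pow_le_pow_left₀ (by positivity) (h v) _

lemma two_mul_le_of_pow_le_two_mul_sqrt_pow {p k n : ℕ} (hbig : 2 ^ (2 * k) < p)
    (h : (p : ℝ) ^ n ≤ (2 * √p) ^ k) : 2 * n ≤ k := by
  have hp : 1 < p := Nat.one_le_two_pow.trans_lt hbig
  have hsq : (p : ℝ) ^ (2 * n) ≤ 2 ^ (2 * k) * p ^ k := calc
    (p : ℝ) ^ (2 * n) = ((p : ℝ) ^ n) ^ 2 := by ring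
    _ ≤ ((2 * √p) ^ k) ^ 2 := pow_le_pow_left₀ (by positivity) h 2
    _ = 2 ^ (2 * k) * p ^ k := by
      rw [← pow_mul, mul_comm k 2, pow_mul, mul_pow, Real.sq_sqrt p.cast_nonneg, mul_pow, ← pow_mul]
  have hlt : p ^ (2 * n) < p ^ (k + 1) := calc
    p ^ (2 * n) ≤ 2 ^ (2 * k) * p ^ k := by exact_mod_cast hsq
    _ < p * p ^ k := Nat.mul_lt_mul_of_pos_right hbig (by positivity)
    _ = p ^ (k + 1) := by ring
  have := (Nat.pow_lt_pow_iff_right hp).mp hlt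
  omega

theorem product_formula_bound (K : Type) [Field K] [NumberField K]
    (p : ℕ) (hp : p.Prime) (a : 𝓞 K) (ha : a ≠ 0)
    (harch : ∀ v : InfinitePlace K, v (algebraMap (𝓞 K) K a) ≤ 2 * Real.sqrt p)
    (hbig : 2 ^ (2 * Module.finrank ℚ K) < p)
    (s : Finset (Ideal (𝓞 K)))
    (hs : ∀ P ∈ s, P.IsPrime ∧ (p : 𝓞 K) ∈ P ∧ a ∈ P) :
    2 * ∑ P ∈ s, Ideal.inertiaDeg' (Ideal.span {(p : ℤ)}) P ≤
      Module.finrank ℚ K := by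
  refine two_mul_le_of_pow_le_two_mul_sqrt_pow hbig ?_
  have hpos : 0 < absNorm (span {a}) := by
    simpa [Nat.pos_iff_ne_zero, absNorm_eq_zero_iff] using ha
  calc (p : ℝ) ^ ∑ P ∈ s, (span {(p : ℤ)}).inertiaDeg' P
    _ ≤ absNorm (span {a}) := by
      exact_mod_cast Nat.le_of_dvd hpos (pow_sum_inertiaDeg'_dvd_absNorm_span_singleton hp hs)
    _ ≤ (2 * √p) ^ Module.finrank ℚ K := absNorm_span_singleton_le_pow_finrank harch
end

section
/- Let α be an algebraic integer generating a CM field K = ℚ(α), and let p be a rational prime that splits completely in K, with α·ᾱ = p (i.e., α is a Weil p-number of weight 1 whose complex conjugate satisfies ᾱ = p/α). Then, with {℘_1,...,℘_m, ℘̄_1,...,℘̄_m} the primes of K over p (2m = [K:ℚ]), after renaming, α·O_K = ℘_1···℘_m and ᾱ·O_K = ℘̄_1···℘̄_m; consequently α + ᾱ lies in no prime of O_K over p. -/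
open NumberField

theorem cm_weil_number_ordinary (K : Type) [Field K] [NumberField K]
    (ι : 𝓞 K ≃+* 𝓞 K)
    (hconj : ∀ (φ : K →+* ℂ) (x : 𝓞 K),
      φ (algebraMap (𝓞 K) K (ι x)) = starRingEnd ℂ (φ (algebraMap (𝓞 K) K x)))
    (α : 𝓞 K) (hgen : Algebra.adjoin ℚ {algebraMap (𝓞 K) K α} = ⊤)
    (p : ℕ) (hp : p.Prime)
    (hsplit : ∃ s : Finset (Ideal (𝓞 K)), s.card = Module.finrank ℚ K ∧
      (∀ P ∈ s, P.IsPrime) ∧ Ideal.span {(p : 𝓞 K)} = ∏ P ∈ s, P)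
    (hweil : α * ι α = (p : 𝓞 K)) :
    (∀ P : Ideal (𝓞 K), P.IsPrime → (p : 𝓞 K) ∈ P → (α ∈ P ↔ ι α ∉ P)) ∧
      ∀ P : Ideal (𝓞 K), P.IsPrime → (p : 𝓞 K) ∈ P → α + ι α ∉ P := by
  classical
  obtain ⟨s, hcard, hprimes, hprod⟩ := hsplit
  have hp0 : (p : 𝓞 K) ≠ 0 := by
    exact_mod_cast Nat.cast_ne_zero.mpr hp.ne_zero
  have hspan0 : Ideal.span {(p : 𝓞 K)} ≠ ⊥ := by
    simpa [Ideal.span_singleton_eq_bot] using hp0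
  -- every member of s is a nonzero prime
  have hQbot : ∀ Q ∈ s, Q ≠ (⊥ : Ideal (𝓞 K)) := by
    intro Q hQ hbot
    apply hspan0
    rw [hprod]
    exact Finset.prod_eq_zero hQ hbot
  have key : ∀ P : Ideal (𝓞 K), P.IsPrime → (p : 𝓞 K) ∈ P →
      ¬ (α ∈ P ∧ ι α ∈ P) := by
    intro P hP hpP ⟨h1, h2⟩
    -- P is one of the primes in s
    have hle : (∏ Q ∈ s, Q) ≤ P := by
      rw [← hprod, Ideal.span_le]
      simpa using hpP
    obtain ⟨Q, hQs, hQP⟩ := (hP.prod_le).mp hle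
    have hQmax : Q.IsMaximal :=
      Ideal.IsPrime.isMaximal (hprimes Q hQs) (hQbot Q hQs)
    have hPQ : P = Q := (hQmax.eq_of_le hP.ne_top hQP).symm
    subst hPQ
    -- span p ≤ P^2, i.e. P^2 ∣ ∏ Q
    have hmem2 : (p : 𝓞 K) ∈ P * P := by
      rw [← hweil]; exact Ideal.mul_mem_mul h1 h2
    have hdvd : P * P ∣ ∏ Q ∈ s, Q := by
      rw [← hprod, Ideal.dvd_iff_le, Ideal.span_le]
      simpa using hmem2
    rw [← Finset.mul_prod_erase s _ hQs] at hdvd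
    have hPbot : P ≠ ⊥ := hQbot P hQs
    have hdvd2 : P ∣ ∏ Q ∈ s.erase P, Q :=
      (mul_dvd_mul_iff_left hPbot).mp hdvd
    have hPprime : Prime P := Ideal.prime_of_isPrime hPbot hP
    obtain ⟨Q, hQe, hPQ⟩ := hPprime.exists_mem_finset_dvd hdvd2
    have hQs' : Q ∈ s := Finset.mem_of_mem_erase hQe
    have hQmax' : Q.IsMaximal :=
      Ideal.IsPrime.isMaximal (hprimes Q hQs') (hQbot Q hQs')
    have : Q = P := hQmax'.eq_of_le hP.ne_top (Ideal.le_of_dvd hPQ)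
    exact (Finset.ne_of_mem_erase hQe) this
  have main : ∀ P : Ideal (𝓞 K), P.IsPrime → (p : 𝓞 K) ∈ P → (α ∈ P ↔ ι α ∉ P) := by
    intro P hP hpP
    have hor : α ∈ P ∨ ι α ∈ P := hP.mem_or_mem (by rwa [hweil])
    constructor
    · intro h1 h2; exact key P hP hpP ⟨h1, h2⟩
    · intro h2; exact hor.resolve_right h2
  refine ⟨main, fun P hP hpP hsum => ?_⟩
  by_cases h1 : α ∈ P
  · exact (main P hP hpP).mp h1 (by
      have : ι α = (α + ι α) - α := by ring
      rw [this]; exact Ideal.sub_mem P hsum h1)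
  · have h2 : ι α ∈ P := by
      by_contra h2
      exact h1 ((main P hP hpP).mpr h2)
    exact h1 (by
      have : α = (α + ι α) - ι α := by ring
      rw [this]; exact Ideal.sub_mem P hsum h2)
end
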